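/- The Chen–Epstein density is nonnegative: for all $\alpha,\beta,c,y\in\mathbb{R}$, $f^{\alpha,\beta,c}(y)=\frac{1}{\sqrt{2\pi}}e^{-\frac{(y-\beta)^2-2\alpha(|y-c|-|c-\beta|)+\alpha^2}{2}}-\alpha e^{2\alpha|y-c|}\Phi(-|c-\beta|-|y-c|-\alpha)\ge0$. -/

import Mathlib

open MeasureTheory

/-- The standard normal cumulative distribution function. -/
noncomputable def stdNormalCDF (x : ℝ) : ℝ :=
  (Real.sqrt (2 * Real.pi))⁻¹ * ∫ y in Set.Iic x, Real.exp (-y ^ 2 / 2)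

/-- The Chen–Epstein density `f^{α,β,c}` arising in the nonlinear CLT with mean
uncertainty. -/
noncomputable def chenEpsteinDensity (α β c y : ℝ) : ℝ :=
  (Real.sqrt (2 * Real.pi))⁻¹ *
      Real.exp (-((y - β) ^ 2 - 2 * α * (|y - c| - |c - β|) + α ^ 2) / 2)
    - α * Real.exp (2 * α * |y - c|) * stdNormalCDF (-|c - β| - |y - c| - α)

/-!
For `α ≤ 0` both terms of the density are nonnegative. For `α > 0` put
`t = |c - β| + |y - c| + α ≥ α`. Mills' inequality `t Φ(-t) ≤ φ(t)` bounds the subtracted term by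
`e^{2α|y-c|} φ(t)`, and the triangle inequality `|y - β| ≤ |y - c| + |c - β|` shows that this is at
most the Gaussian term.
-/

open Set Filter Real Topology

lemma integrable_exp_neg_sq_div_two : Integrable fun y : ℝ => exp (-y ^ 2 / 2) := by
  simpa [div_eq_inv_mul] using integrable_exp_neg_mul_sq (b := 1 / 2) (by norm_num)

lemma integrable_neg_mul_exp_neg_sq_div_two : Integrable fun y : ℝ => -y * exp (-y ^ 2 / 2) := by
  simpa [div_eq_inv_mul] using (integrable_mul_exp_neg_mul_sq (b := 1 / 2) (by norm_num)).fun_neg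

lemma tendsto_exp_neg_sq_div_two_atBot : Tendsto (fun y : ℝ => exp (-y ^ 2 / 2)) atBot (𝓝 0) := by
  have hsq : Tendsto (fun y : ℝ => y ^ 2) atBot atTop := by
    simpa [Function.comp_def] using
      (tendsto_pow_atTop two_ne_zero).comp (tendsto_neg_atBot_atTop (G := ℝ))
  exact tendsto_exp_atBot.comp (by simpa [neg_div] using hsq.atTop_div_const two_pos)

lemma integral_Iic_neg_mul_exp_neg_sq_div_two (a : ℝ) :
    ∫ y in Iic a, -y * exp (-y ^ 2 / 2) = exp (-a ^ 2 / 2) := by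
  rw [integral_Iic_of_hasDerivAt_of_tendsto' (fun y _ => ?_)
    integrable_neg_mul_exp_neg_sq_div_two.integrableOn
    tendsto_exp_neg_sq_div_two_atBot, sub_zero]
  have h : HasDerivAt (fun y : ℝ => -y ^ 2 / 2) (-y) y :=
    ((hasDerivAt_pow 2 y).fun_neg.div_const 2).congr_deriv (by push_cast; ring)
  simpa [mul_comm] using h.exp

/-- Mills' inequality for the Gaussian tail: on `y ≤ -t` the weight `t` is dominated by `-y`,
whose Gaussian integral is explicit. -/
lemma mul_integral_Iic_neg_exp_neg_sq_div_two_le (t : ℝ) :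
    t * ∫ y in Iic (-t), exp (-y ^ 2 / 2) ≤ exp (-t ^ 2 / 2) :=
  calc t * ∫ y in Iic (-t), exp (-y ^ 2 / 2) = ∫ y in Iic (-t), t * exp (-y ^ 2 / 2) :=
        (integral_const_mul t _).symm
    _ ≤ ∫ y in Iic (-t), -y * exp (-y ^ 2 / 2) :=
        setIntegral_mono_on (integrable_exp_neg_sq_div_two.const_mul t).integrableOn
          integrable_neg_mul_exp_neg_sq_div_two.integrableOn measurableSet_Iic
          fun y hy => mul_le_mul_of_nonneg_right (by linarith [mem_Iic.mp hy]) (exp_pos _).le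
    _ = exp (-t ^ 2 / 2) := by rw [integral_Iic_neg_mul_exp_neg_sq_div_two, neg_sq]

lemma stdNormalCDF_nonneg (x : ℝ) : 0 ≤ stdNormalCDF x :=
  mul_nonneg (by positivity) (setIntegral_nonneg measurableSet_Iic fun _ _ => (exp_pos _).le)

lemma mul_stdNormalCDF_neg_le (t : ℝ) :
    t * stdNormalCDF (-t) ≤ (√(2 * π))⁻¹ * exp (-t ^ 2 / 2) := by
  rw [stdNormalCDF, mul_left_comm]
  exact mul_le_mul_of_nonneg_left (mul_integral_Iic_neg_exp_neg_sq_div_two_le t) (by positivity)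

/-- The Chen–Epstein density is nonnegative. -/
theorem chenEpsteinDensity_nonneg (α β c y : ℝ) :
    0 ≤ chenEpsteinDensity α β c y := by
  rw [chenEpsteinDensity, sub_nonneg]
  rcases le_or_gt α 0 with hα | hα
  · calc α * exp (2 * α * |y - c|) * stdNormalCDF (-|c - β| - |y - c| - α) ≤ 0 :=
          mul_nonpos_of_nonpos_of_nonneg (mul_nonpos_of_nonpos_of_nonneg hα (exp_pos _).le)
            (stdNormalCDF_nonneg _)
      _ ≤ _ := by positivity
  set t := |c - β| + |y - c| + α with ht
  have hneg : -|c - β| - |y - c| - α = -t := by rw [ht]; ring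
  have hΦ : α * stdNormalCDF (-t) ≤ (√(2 * π))⁻¹ * exp (-t ^ 2 / 2) :=
    (mul_le_mul_of_nonneg_right (le_add_of_nonneg_left (by positivity))
      (stdNormalCDF_nonneg _)).trans (mul_stdNormalCDF_neg_le t)
  have htri : (y - β) ^ 2 ≤ (|c - β| + |y - c|) ^ 2 := by
    rw [← sq_abs]
    exact pow_le_pow_left₀ (abs_nonneg _) ((abs_sub_le y c β).trans_eq (add_comm _ _)) 2
  calc α * exp (2 * α * |y - c|) * stdNormalCDF (-|c - β| - |y - c| - α)
      = exp (2 * α * |y - c|) * (α * stdNormalCDF (-t)) := by rw [hneg]; ring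
    _ ≤ exp (2 * α * |y - c|) * ((√(2 * π))⁻¹ * exp (-t ^ 2 / 2)) := by gcongr
    _ = (√(2 * π))⁻¹ * exp (2 * α * |y - c| + -t ^ 2 / 2) := by rw [exp_add]; ring
    _ ≤ _ := by gcongr; nlinarith
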